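/- Let λ, λ₁, λ₂ ∈ ℂ be nonzero. Then the conjugacy class M_λ of the Jordan block [[λ, 1], [0, λ]] in GL(2, ℂ) is not isomorphic, as a conjugation quandle, to the conjugacy class M_{λ₁,λ₂} of diag(λ₁, λ₂); that is, there is no bijection f : M_λ → M_{λ₁,λ₂} with f(B⁻¹ A B) = f(B)⁻¹ f(A) f(B) for all A, B ∈ M_λ. -/

import Mathlib

open Matrix

/-- `GL(2, ℂ)`, the group of invertible 2×2 complex matrices. -/
abbrev GL2 : Type := Matrix.GeneralLinearGroup (Fin 2) ℂ

/-- The conjugacy class of `A` in `GL(2, ℂ)`. -/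
def conjClass (A : GL2) : Set GL2 := {X | ∃ P : GL2, X = P⁻¹ * A * P}

/-- `f` is an isomorphism of conjugation quandles from `S` onto `T`: a bijection of `S`
onto `T` with `f(B⁻¹ A B) = f(B)⁻¹ f(A) f(B)` for all `A, B ∈ S`. -/
def IsConjQuandleIso (S T : Set GL2) (f : GL2 → GL2) : Prop :=
  Set.BijOn f S T ∧ ∀ A ∈ S, ∀ B ∈ S, f (B⁻¹ * A * B) = (f B)⁻¹ * f A * f B

lemma diag2 (a b : ℂ) : Matrix.diagonal ![a, b] = !![a, 0; 0, b] := by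
  ext i j
  fin_cases i <;> fin_cases j <;> simp [Matrix.diagonal]

-- Jordan-type unit !![l, c; 0, l]
noncomputable def Jun (l c : ℂ) (hl : l ≠ 0) : GL2 :=
  ⟨!![l, c; 0, l], !![l⁻¹, -(c / (l * l)); 0, l⁻¹],
   by ext i j; fin_cases i <;> fin_cases j <;>
      simp [Matrix.mul_apply, Fin.sum_univ_two] <;> field_simp <;> ring,
   by ext i j; fin_cases i <;> fin_cases j <;>
      simp [Matrix.mul_apply, Fin.sum_univ_two] <;> field_simp <;> ring⟩

noncomputable def Pun (c : ℂ) (hc : c ≠ 0) : GL2 :=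
  ⟨!![1, 0; 0, c], !![1, 0; 0, c⁻¹],
   by ext i j; fin_cases i <;> fin_cases j <;>
      simp [Matrix.mul_apply, Fin.sum_univ_two] <;> field_simp,
   by ext i j; fin_cases i <;> fin_cases j <;>
      simp [Matrix.mul_apply, Fin.sum_univ_two] <;> field_simp⟩

lemma keyLem (l1 l2 : ℂ) (D X : GL2)
    (hD : (D : Matrix (Fin 2) (Fin 2) ℂ) = Matrix.diagonal ![l1, l2])
    (hX : X ∈ conjClass D) (hc : X * D = D * X) :
    (X : Matrix (Fin 2) (Fin 2) ℂ) = Matrix.diagonal ![l1, l2] ∨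
    (X : Matrix (Fin 2) (Fin 2) ℂ) = Matrix.diagonal ![l2, l1] := by
  obtain ⟨P, hP⟩ := hX
  have hPX : P * X * P⁻¹ = D := by rw [hP]; group
  have hMX : (P : Matrix (Fin 2) (Fin 2) ℂ) * X * ((P⁻¹ : GL2) : Matrix (Fin 2) (Fin 2) ℂ)
      = (D : Matrix (Fin 2) (Fin 2) ℂ) := by
    rw [← hPX]; simp [Units.val_mul]
  have hinv : ((P⁻¹ : GL2) : Matrix (Fin 2) (Fin 2) ℂ) * P = 1 := by
    rw [← Units.val_mul]; simp
  have hinv' : (P : Matrix (Fin 2) (Fin 2) ℂ) * ((P⁻¹ : GL2) : Matrix (Fin 2) (Fin 2) ℂ) = 1 := by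
    rw [← Units.val_mul]; simp
  by_cases h12 : l1 = l2
  · left
    have hval : (X : Matrix (Fin 2) (Fin 2) ℂ)
        = ((P⁻¹ : GL2) : Matrix (Fin 2) (Fin 2) ℂ) * (D : Matrix (Fin 2) (Fin 2) ℂ) * P := by
      rw [hP]; simp [Units.val_mul, mul_assoc]
    have hsc : (D : Matrix (Fin 2) (Fin 2) ℂ) = l1 • (1 : Matrix (Fin 2) (Fin 2) ℂ) := by
      rw [hD, ← h12, diag2]
      ext i j; fin_cases i <;> fin_cases j <;> simp [Matrix.one_apply]
    rw [hval, hsc, ← h12, diag2, mul_smul_comm, mul_one, smul_mul_assoc, hinv]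
    ext i j; fin_cases i <;> fin_cases j <;> simp [Matrix.one_apply]
  · set M := (X : Matrix (Fin 2) (Fin 2) ℂ) with hM
    have hcM : M * Matrix.diagonal ![l1, l2] = Matrix.diagonal ![l1, l2] * M := by
      rw [← hD, ← Units.val_mul, ← Units.val_mul, hc]
    have h01 : M 0 1 = 0 := by
      have h := congrFun (congrFun hcM 0) 1
      rw [Matrix.mul_diagonal, Matrix.diagonal_mul] at h
      simp only [Matrix.cons_val_one, Matrix.head_cons, Matrix.cons_val_zero] at h
      have h2 : (l1 - l2) * M 0 1 = 0 := by linear_combination -h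
      rcases mul_eq_zero.mp h2 with h3 | h3
      · exact absurd (sub_eq_zero.mp h3) h12
      · exact h3
    have h10 : M 1 0 = 0 := by
      have h := congrFun (congrFun hcM 1) 0
      rw [Matrix.mul_diagonal, Matrix.diagonal_mul] at h
      simp only [Matrix.cons_val_one, Matrix.head_cons, Matrix.cons_val_zero] at h
      have h2 : (l1 - l2) * M 1 0 = 0 := by linear_combination h
      rcases mul_eq_zero.mp h2 with h3 | h3
      · exact absurd (sub_eq_zero.mp h3) h12
      · exact h3
    have htr : M 0 0 + M 1 1 = l1 + l2 := by
      have h := congrArg Matrix.trace hMX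
      rw [Matrix.trace_mul_comm, ← Matrix.mul_assoc, hinv, Matrix.one_mul, hD] at h
      simpa [Matrix.trace_fin_two, diag2] using h
    have hdet : M 0 0 * M 1 1 = l1 * l2 := by
      have h := congrArg Matrix.det hMX
      rw [Matrix.det_mul, Matrix.det_mul] at h
      have h1 : (P : Matrix (Fin 2) (Fin 2) ℂ).det
          * ((P⁻¹ : GL2) : Matrix (Fin 2) (Fin 2) ℂ).det = 1 := by
        rw [← Matrix.det_mul, hinv', Matrix.det_one]
      have h2 : M.det = ((D : Matrix (Fin 2) (Fin 2) ℂ)).det := by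
        calc M.det = (P : Matrix (Fin 2) (Fin 2) ℂ).det * M.det
            * ((P⁻¹ : GL2) : Matrix (Fin 2) (Fin 2) ℂ).det := by
              rw [mul_comm ((P : Matrix (Fin 2) (Fin 2) ℂ)).det, mul_assoc, h1, mul_one]
          _ = ((D : Matrix (Fin 2) (Fin 2) ℂ)).det := h
      rw [Matrix.det_fin_two, hD, diag2, Matrix.det_fin_two_of] at h2
      rw [h01, h10] at h2
      linear_combination h2
    have hroot : (M 0 0 - l1) * (M 0 0 - l2) = 0 := by
      linear_combination (M 0 0) * htr - hdet - (l1 + l2) * htr + htr * l1 + htr * l2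
    rcases mul_eq_zero.mp hroot with h3 | h3
    · left
      have ha : M 0 0 = l1 := sub_eq_zero.mp h3
      have hb : M 1 1 = l2 := by linear_combination htr - ha
      rw [diag2]
      ext i j; fin_cases i <;> fin_cases j <;> simp [ha, hb, h01, h10]
    · right
      have ha : M 0 0 = l2 := sub_eq_zero.mp h3
      have hb : M 1 1 = l1 := by linear_combination htr - ha
      rw [diag2]
      ext i j; fin_cases i <;> fin_cases j <;> simp [ha, hb, h01, h10]

/-- For nonzero `λ, λ₁, λ₂`, the conjugacy class of the Jordan block `[[λ, 1], [0, λ]]` is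
not isomorphic, as a conjugation quandle, to the conjugacy class of `diag(λ₁, λ₂)`. -/
theorem stmt14 (l l1 l2 : ℂ) (hl : l ≠ 0) (h1 : l1 ≠ 0) (h2 : l2 ≠ 0)
    (J D : GL2) (hJ : (J : Matrix (Fin 2) (Fin 2) ℂ) = !![l, 1; 0, l])
    (hD : (D : Matrix (Fin 2) (Fin 2) ℂ) = Matrix.diagonal ![l1, l2]) :
    ¬∃ f : GL2 → GL2, IsConjQuandleIso (conjClass J) (conjClass D) f := by
  rintro ⟨f, hbij, hq⟩
  -- J equals the unit Jun l 1
  have hJ1 : J = Jun l 1 hl := by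
    apply Units.ext
    rw [hJ]; rfl
  -- membership of Jun l c in the conjugacy class of J
  have hmem : ∀ (c : ℂ) (hc : c ≠ 0), Jun l c hl ∈ conjClass J := by
    intro c hc
    refine ⟨Pun c hc, Units.ext ?_⟩
    show (Jun l c hl : Matrix (Fin 2) (Fin 2) ℂ)
      = ((Pun c hc)⁻¹ * J * Pun c hc : GL2)
    rw [Units.val_mul, Units.val_mul, hJ]
    show !![l, c; 0, l] = !![1, 0; 0, c⁻¹] * !![l, 1; 0, l] * !![1, 0; 0, c]
    ext i j
    fin_cases i <;> fin_cases j <;>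
      simp [Matrix.mul_apply, Fin.sum_univ_two] <;> field_simp <;> ring
  have hJmem : J ∈ conjClass J := ⟨1, by group⟩
  -- Jun's commute with each other
  have hcomm : ∀ (c c' : ℂ) (hc : c ≠ 0) (hc' : c' ≠ 0),
      Jun l c hl * Jun l c' hl = Jun l c' hl * Jun l c hl := by
    intro c c' hc hc'
    apply Units.ext
    rw [Units.val_mul, Units.val_mul]
    show !![l, c; 0, l] * !![l, c'; 0, l] = !![l, c'; 0, l] * !![l, c; 0, l]
    ext i j
    fin_cases i <;> fin_cases j <;>
      simp [Matrix.mul_apply, Fin.sum_univ_two] <;> ring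
  -- images commute with f J
  have himg : ∀ (c : ℂ) (hc : c ≠ 0),
      f (Jun l c hl) * f J = f J * f (Jun l c hl) := by
    intro c hc
    have hcJ : (Jun l c hl)⁻¹ * J * Jun l c hl = J := by
      rw [hJ1]
      have := hcomm 1 c one_ne_zero hc
      rw [mul_assoc]
      rw [this]
      rw [← mul_assoc, inv_mul_cancel, one_mul]
    have h := hq J hJmem (Jun l c hl) (hmem c hc)
    rw [hcJ] at h
    calc f (Jun l c hl) * f J
        = f (Jun l c hl) * ((f (Jun l c hl))⁻¹ * f J * f (Jun l c hl)) := by rw [← h]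
      _ = f J * f (Jun l c hl) := by group
  -- pull back to conjugates of D
  obtain ⟨Q, hQ⟩ := hbij.mapsTo hJmem
  have hZ1 : Q * f J * Q⁻¹ = D := by rw [hQ]; group
  have hZmem : ∀ (c : ℂ) (hc : c ≠ 0), Q * f (Jun l c hl) * Q⁻¹ ∈ conjClass D := by
    intro c hc
    obtain ⟨P, hP⟩ := hbij.mapsTo (hmem c hc)
    exact ⟨P * Q⁻¹, by rw [hP]; group⟩
  have hZcomm : ∀ (c : ℂ) (hc : c ≠ 0),
      (Q * f (Jun l c hl) * Q⁻¹) * D = D * (Q * f (Jun l c hl) * Q⁻¹) := by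
    intro c hc
    rw [← hZ1]
    have e1 : Q * f (Jun l c hl) * Q⁻¹ * (Q * f J * Q⁻¹)
        = Q * (f (Jun l c hl) * f J) * Q⁻¹ := by group
    have e2 : Q * f J * Q⁻¹ * (Q * f (Jun l c hl) * Q⁻¹)
        = Q * (f J * f (Jun l c hl)) * Q⁻¹ := by group
    rw [e1, e2, himg c hc]
  -- distinctness
  have hJunNe : ∀ (c c' : ℂ) (hc : c ≠ 0) (hc' : c' ≠ 0), c ≠ c' →
      Jun l c hl ≠ Jun l c' hl := by
    intro c c' hc hc' hne heq
    apply hne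
    have := congrArg (fun u : GL2 => (u : Matrix (Fin 2) (Fin 2) ℂ) 0 1) heq
    exact this
  have hfNe : ∀ (c c' : ℂ) (hc : c ≠ 0) (hc' : c' ≠ 0), c ≠ c' →
      f (Jun l c hl) ≠ f (Jun l c' hl) := by
    intro c c' hc hc' hne heq
    exact hJunNe c c' hc hc' hne (hbij.injOn (hmem c hc) (hmem c' hc') heq)
  have hZNe : ∀ (c c' : ℂ) (hc : c ≠ 0) (hc' : c' ≠ 0), c ≠ c' →
      Q * f (Jun l c hl) * Q⁻¹ ≠ Q * f (Jun l c' hl) * Q⁻¹ := by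
    intro c c' hc hc' hne heq
    exact hfNe c c' hc hc' hne (mul_left_cancel (mul_right_cancel heq))
  -- apply keyLem to Z 2 and Z 3
  have hk2 := keyLem l1 l2 D _ hD (hZmem 2 two_ne_zero) (hZcomm 2 two_ne_zero)
  have hk3 := keyLem l1 l2 D _ hD (hZmem 3 three_ne_zero) (hZcomm 3 three_ne_zero)
  -- Z1 = D, so Z2 ≠ D and Z3 ≠ D
  have hZ2D : Q * f (Jun l 2 hl) * Q⁻¹ ≠ D := by
    rw [← hZ1, hJ1]
    exact hZNe 2 1 two_ne_zero one_ne_zero (by norm_num)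
  have hZ3D : Q * f (Jun l 3 hl) * Q⁻¹ ≠ D := by
    rw [← hZ1, hJ1]
    exact hZNe 3 1 three_ne_zero one_ne_zero (by norm_num)
  have hk2' : ((Q * f (Jun l 2 hl) * Q⁻¹ : GL2) : Matrix (Fin 2) (Fin 2) ℂ)
      = Matrix.diagonal ![l2, l1] := by
    rcases hk2 with h | h
    · exact absurd (Units.ext (h.trans hD.symm)) hZ2D
    · exact h
  have hk3' : ((Q * f (Jun l 3 hl) * Q⁻¹ : GL2) : Matrix (Fin 2) (Fin 2) ℂ)
      = Matrix.diagonal ![l2, l1] := by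
    rcases hk3 with h | h
    · exact absurd (Units.ext (h.trans hD.symm)) hZ3D
    · exact h
  exact hZNe 2 3 two_ne_zero three_ne_zero (by norm_num)
    (Units.ext (hk2'.trans hk3'.symm))
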